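/- Let X be a space, let π be a representation of ℂ_u[X] on a complex Hilbert space H, and let ξ ∈ H. Then ξ is an invariant vector (i.e. π(v)ξ = π(vv*)ξ for every partial translation v) if and only if π(Φ_X(T))ξ = π(T)ξ for all T ∈ ℂ_u[X], where Φ_X(T) is the diagonal matrix with Φ_X(T)(x) = Σ_{y∈X} T_{x,y}. -/

import Mathlib

open scoped ENNReal Classical

noncomputable section

namespace GeomPropT

variable {X : Type*}

/-- The tube of diameter `R` in `X × X`. -/
def Tube (X : Type*) [EMetricSpace X] (R : ℝ≥0∞) : Set (X × X) :=
  {p : X × X | edist p.1 p.2 ≤ R}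

/-- A subset of `X × X` is controlled if it is contained in a tube of finite diameter. -/
def Controlled [EMetricSpace X] (E : Set (X × X)) : Prop :=
  ∃ R : ℝ≥0∞, R < ⊤ ∧ E ⊆ Tube X R

/-- `X` has bounded geometry if balls of any given finite radius have uniformly
bounded cardinality. -/
def BoundedGeometry (X : Type*) [EMetricSpace X] : Prop :=
  ∀ R : ℝ≥0∞, R < ⊤ → ∃ N : ℕ, ∀ x : X,
    {y : X | edist x y ≤ R}.Finite ∧ {y : X | edist x y ≤ R}.ncard ≤ N

/-- Composition of subsets of `X × X`. -/
def compRel (E F : Set (X × X)) : Set (X × X) :=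
  {p : X × X | ∃ z : X, (p.1, z) ∈ E ∧ (z, p.2) ∈ F}

/-- `compPow E n` is the `(n+1)`-fold composition `E^{∘(n+1)}`. -/
def compPow (E : Set (X × X)) : ℕ → Set (X × X)
  | 0 => E
  | n + 1 => compRel E (compPow E n)

/-- A controlled set is generating if every controlled set is contained in some
iterated composition of it. -/
def Generating [EMetricSpace X] (E : Set (X × X)) : Prop :=
  Controlled E ∧ ∀ F : Set (X × X), Controlled F → ∃ n : ℕ, F ⊆ compPow E n

/-- `X` is monogenic if it admits a controlled generating set. -/
def Monogenic (X : Type*) [EMetricSpace X] : Prop :=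
  ∃ E : Set (X × X), Generating E

/-- A "space": bounded geometry, monogenic, with at most countably many coarse
components. -/
structure IsSpace (X : Type*) [EMetricSpace X] : Prop where
  boundedGeometry : BoundedGeometry X
  monogenic : Monogenic X
  countableComponents : Set.Countable {C : Set X | ∃ x : X, C = {y : X | edist x y < ⊤}}

/-- The support of a matrix. -/
def matSupport (T : X → X → ℂ) : Set (X × X) := {p : X × X | T p.1 p.2 ≠ 0}

/-- Membership in `ℂ_u[X]`: uniformly bounded entries and controlled support. -/
def CuElem [EMetricSpace X] (T : X → X → ℂ) : Prop :=
  (∃ M : ℝ, ∀ x y : X, ‖T x y‖ ≤ M) ∧ Controlled (matSupport T)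

/-- The identity matrix. -/
def matOne : X → X → ℂ := fun x y => if x = y then 1 else 0

/-- Matrix multiplication. -/
def matMul (T S : X → X → ℂ) : X → X → ℂ := fun x y => ∑' z : X, T x z * S z y

/-- Matrix adjoint. -/
def matStar (T : X → X → ℂ) : X → X → ℂ := fun x y => starRingEnd ℂ (T y x)

/-- Matrix powers. -/
def matPow (A : X → X → ℂ) : ℕ → X → X → ℂ
  | 0 => matOne
  | n + 1 => matMul A (matPow A n)

/-- A function `f ∈ ℓ∞(X)` viewed as a diagonal matrix. -/
def diag (f : X → ℂ) : X → X → ℂ := fun x y => if x = y then f x else 0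

/-- The matrix of a partial translation: a `{0,1}`-matrix with at most one `1` in
each row and each column, and controlled support. -/
def IsPartialTranslation [EMetricSpace X] (v : X → X → ℂ) : Prop :=
  (∀ x y : X, v x y = 0 ∨ v x y = 1) ∧
  (∀ x y y' : X, v x y = 1 → v x y' = 1 → y = y') ∧
  (∀ x x' y : X, v x y = 1 → v x' y = 1 → x = x') ∧
  Controlled (matSupport v)

/-- Membership in `S_X`: finite propagation permutation matrices. -/
def IsPermMatrix [EMetricSpace X] (A : X → X → ℂ) : Prop :=
  (∀ x y : X, A x y = 0 ∨ A x y = 1) ∧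
  (∀ x : X, ∃! y : X, A x y = 1) ∧
  (∀ y : X, ∃! x : X, A x y = 1) ∧
  Controlled (matSupport A)

/-- Membership in `A_X` with common row/column sum `c`. -/
def MemAX [EMetricSpace X] (A : X → X → ℂ) (c : ℂ) : Prop :=
  CuElem A ∧ ∀ x : X, HasSum (fun y => A x y) c ∧ HasSum (fun y => A y x) c

variable {H : Type*} [NormedAddCommGroup H] [InnerProductSpace ℂ H]

/-- A representation of `ℂ_u[X]`: a unital `*`-homomorphism into `B(H)`. -/
structure IsRepresentation [EMetricSpace X] [CompleteSpace H]
    (π : (X → X → ℂ) → (H →L[ℂ] H)) : Prop where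
  map_one : π matOne = 1
  map_add : ∀ T S : X → X → ℂ, CuElem T → CuElem S → π (T + S) = π T + π S
  map_smul : ∀ (c : ℂ) (T : X → X → ℂ), CuElem T → π (c • T) = c • π T
  map_mul : ∀ T S : X → X → ℂ, CuElem T → CuElem S → π (matMul T S) = π T * π S
  map_star : ∀ T : X → X → ℂ, CuElem T → π (matStar T) = ContinuousLinearMap.adjoint (π T)

/-- The subspace `H^π` of invariant vectors. -/
def invariantSubmodule [EMetricSpace X] (π : (X → X → ℂ) → (H →L[ℂ] H)) :
    Submodule ℂ H where
  carrier := {ξ : H | ∀ v : X → X → ℂ, IsPartialTranslation v →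
    π v ξ = π (matMul v (matStar v)) ξ}
  add_mem' := by
    intro a b ha hb v hv
    simp only [map_add, ha v hv, hb v hv]
  zero_mem' := by
    intro v hv
    simp
  smul_mem' := by
    intro c ξ hξ v hv
    simp only [map_smul, hξ v hv]

/-- `p` is the orthogonal projection onto `S`. -/
def IsOrthoProjOnto (p : H →L[ℂ] H) (S : Submodule ℂ H) : Prop :=
  ∀ ξ : H, p ξ ∈ S ∧ ξ - p ξ ∈ Sᗮ

/-- Geometric Property (T). -/
def HasPropertyT (X : Type*) [EMetricSpace X] : Prop :=
  ∀ E : Set (X × X), Generating E →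
    ∃ c : ℝ, 0 < c ∧
      ∀ (H : Type) [NormedAddCommGroup H] [InnerProductSpace ℂ H] [CompleteSpace H]
        (π : (X → X → ℂ) → (H →L[ℂ] H)), IsRepresentation π →
        ∀ ξ ∈ (invariantSubmodule π)ᗮ,
          ∃ v : X → X → ℂ, IsPartialTranslation v ∧ matSupport v ⊆ E ∧
            c * ‖ξ‖ ≤ ‖π v ξ - π (matMul v (matStar v)) ξ‖

/-- Bounded functions (elements of `ℓ∞(X)`). -/
def BddFun (f : X → ℂ) : Prop := ∃ M : ℝ, ∀ x : X, ‖f x‖ ≤ M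

/-- `f ∘ t`, extended by `0`, where `t` is the partial translation with matrix `v`. -/
def translateFun (v : X → X → ℂ) (f : X → ℂ) : X → ℂ := fun y => ∑' x : X, v x y * f x

/-- An invariant mean on `ℓ∞(X)`: a positive unital linear functional invariant
under partial translations. -/
def IsInvariantMean [EMetricSpace X] (φ : (X → ℂ) → ℂ) : Prop :=
  (∀ f g : X → ℂ, BddFun f → BddFun g → φ (f + g) = φ f + φ g) ∧
  (∀ (c : ℂ) (f : X → ℂ), BddFun f → φ (c • f) = c * φ f) ∧
  φ (fun _ => 1) = 1 ∧
  (∀ f : X → ℂ, BddFun f → (∀ x, 0 ≤ (f x).re ∧ (f x).im = 0) →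
    0 ≤ (φ f).re ∧ (φ f).im = 0) ∧
  (∀ f : X → ℂ, BddFun f → ∀ v : X → X → ℂ, IsPartialTranslation v →
    (∀ x : X, f x ≠ 0 → ∃ y : X, v x y = 1) → φ (translateFun v f) = φ f)

/-- `X` is amenable if `ℓ∞(X)` admits an invariant mean. -/
def IsAmenable (X : Type*) [EMetricSpace X] : Prop :=
  ∃ φ : (X → ℂ) → ℂ, IsInvariantMean φ

/-- A representation of `ℂ_u[X]` bundled with its Hilbert space. -/
structure HilbertRep (X : Type*) [EMetricSpace X] where
  H : Type
  [nacg : NormedAddCommGroup H]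
  [ips : InnerProductSpace ℂ H]
  [cs : CompleteSpace H]
  π : (X → X → ℂ) → (H →L[ℂ] H)
  rep : IsRepresentation π

attribute [instance] HilbertRep.nacg HilbertRep.ips HilbertRep.cs

section Aux

variable [EMetricSpace X]

lemma controlled_mono' {E F : Set (X × X)} (h : E ⊆ F) (hF : Controlled F) : Controlled E := by
  obtain ⟨R, hR, hsub⟩ := hF
  exact ⟨R, hR, h.trans hsub⟩

lemma cuElem_diag' {f : X → ℂ} (hf : ∃ M, ∀ x, ‖f x‖ ≤ M ∧ (0:ℝ) ≤ M) :
    CuElem (diag f) := by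
  obtain ⟨M, hM⟩ := hf
  refine ⟨⟨max M 0, fun x y => ?_⟩, 0, by simp, fun p hp => ?_⟩
  · by_cases h : x = y
    · subst h
      simpa [diag] using Or.inl (b := f x = 0) (hM x).1
    · simp [diag, h, le_max_right]
  · simp only [matSupport, Set.mem_setOf_eq, diag] at hp
    by_cases h : p.1 = p.2
    · simp [Tube, h]
    · simp [h] at hp

lemma cuElem_add' {T S : X → X → ℂ} (hT : CuElem T) (hS : CuElem S) : CuElem (T + S) := by
  obtain ⟨⟨M, hM⟩, R, hR, hRs⟩ := hT
  obtain ⟨⟨M', hM'⟩, R', hR', hRs'⟩ := hS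
  refine ⟨⟨M + M', fun x y => ?_⟩, max R R', max_lt hR hR', fun p hp => ?_⟩
  · calc ‖T x y + S x y‖ ≤ ‖T x y‖ + ‖S x y‖ :=
        norm_add_le _ _
      _ ≤ M + M' := add_le_add (hM x y) (hM' x y)
  · simp only [matSupport, Set.mem_setOf_eq, Pi.add_apply] at hp
    by_cases h : T p.1 p.2 = 0
    · have hS0 : S p.1 p.2 ≠ 0 := by intro h'; exact hp (by simp [h, h'])
      show edist p.1 p.2 ≤ max R R'
      exact le_trans (hRs' hS0 : edist p.1 p.2 ≤ R') (le_max_right _ _)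
    · show edist p.1 p.2 ≤ max R R'
      exact le_trans (hRs h : edist p.1 p.2 ≤ R) (le_max_left _ _)

lemma cuElem_zero' : CuElem (0 : X → X → ℂ) :=
  ⟨⟨0, fun x y => by simp⟩, 0, by simp, fun p hp => by simp [matSupport] at hp⟩

lemma cuElem_sum' {ι : Type*} (s : Finset ι) (F : ι → X → X → ℂ)
    (hF : ∀ i ∈ s, CuElem (F i)) : CuElem (∑ i ∈ s, F i) := by
  induction s using Finset.cons_induction with
  | empty => simpa using cuElem_zero'
  | cons a s ha ih =>
    rw [Finset.sum_cons]
    exact cuElem_add' (hF a (Finset.mem_cons_self a s))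
      (ih fun i hi => hF i (Finset.mem_cons_of_mem hi))

lemma matOne_cuElem' : CuElem (matOne : X → X → ℂ) := by
  have : (matOne : X → X → ℂ) = diag (fun _ => 1) := rfl
  rw [this]
  exact cuElem_diag' ⟨1, fun x => by simp⟩

variable {H : Type*} [NormedAddCommGroup H] [InnerProductSpace ℂ H] [CompleteSpace H]

lemma pi_zero' {π : (X → X → ℂ) → (H →L[ℂ] H)} (hπ : IsRepresentation π) :
    π 0 = 0 := by
  have h := hπ.map_smul 0 matOne matOne_cuElem'
  simpa using h

lemma pi_sum' {π : (X → X → ℂ) → (H →L[ℂ] H)} (hπ : IsRepresentation π)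
    {ι : Type*} (s : Finset ι) (F : ι → X → X → ℂ)
    (hF : ∀ i ∈ s, CuElem (F i)) : π (∑ i ∈ s, F i) = ∑ i ∈ s, π (F i) := by
  induction s using Finset.cons_induction with
  | empty => simpa using pi_zero' hπ
  | cons a s ha ih =>
    rw [Finset.sum_cons, hπ.map_add _ _ (hF a (Finset.mem_cons_self a s))
      (cuElem_sum' s F fun i hi => hF i (Finset.mem_cons_of_mem hi)),
      ih fun i hi => hF i (Finset.mem_cons_of_mem hi), Finset.sum_cons]

lemma matMul_diag_left' (f : X → ℂ) (A : X → X → ℂ) :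
    matMul (diag f) A = fun x y => f x * A x y := by
  funext x y
  simp only [matMul]
  rw [tsum_eq_single x]
  · simp [diag]
  · intro z hz
    simp [diag, (Ne.symm hz : x ≠ z)]

lemma pt_mul_star' {v : X → X → ℂ} (hv : IsPartialTranslation v) :
    matMul v (matStar v) = diag (fun x => ∑' y, v x y) := by
  obtain ⟨h01, hrow, hcol, -⟩ := hv
  funext x y
  simp only [matMul, matStar, diag]
  by_cases h : x = y
  · subst h
    rw [if_pos rfl]
    congr 1
    funext z
    rcases h01 x z with h0 | h1
    · simp [h0]
    · simp [h1]
  · rw [if_neg h]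
    convert tsum_zero with z
    rcases h01 x z with h0 | h1
    · simp [h0]
    · rcases h01 y z with g0 | g1
      · simp [h1, g0]
      · exact absurd (hcol x y z h1 g1) h

lemma exists_injOn_fin' {s : Set X} (hs : s.Finite) {N : ℕ} (h : s.ncard ≤ N) :
    ∃ f : X → Fin (N + 1), Set.InjOn f s := by
  classical
  haveI := hs.fintype
  have hcard : Fintype.card s ≤ N + 1 := by
    have : Fintype.card s = s.ncard := by
      rw [Set.ncard_eq_toFinset_card', Set.toFinset_card]
    omega
  have : Nonempty (s ↪ Fin (N + 1)) := by
    apply Function.Embedding.nonempty_of_card_le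
    simpa using hcard
  obtain ⟨e⟩ := this
  refine ⟨fun x => if h : x ∈ s then e ⟨x, h⟩ else ⟨0, Nat.succ_pos N⟩, ?_⟩
  intro a ha b hb hab
  simp only [dif_pos ha, dif_pos hb] at hab
  exact congrArg Subtype.val (e.injective hab)

end Aux

/-- `ξ` is invariant iff `π(Φ_X(T))ξ = π(T)ξ` for all `T ∈ ℂ_u[X]`,
where `Φ_X(T)` is the diagonal matrix of row sums of `T`. -/
theorem statement9 {X : Type*} [EMetricSpace X] (hX : IsSpace X)
    {H : Type*} [NormedAddCommGroup H] [InnerProductSpace ℂ H] [CompleteSpace H]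
    (π : (X → X → ℂ) → (H →L[ℂ] H)) (hπ : IsRepresentation π) (ξ : H) :
    (∀ v : X → X → ℂ, IsPartialTranslation v → π v ξ = π (matMul v (matStar v)) ξ) ↔
      ∀ T : X → X → ℂ, CuElem T → π (diag (fun x => ∑' y : X, T x y)) ξ = π T ξ := by
  classical
  constructor
  · -- forward direction
    intro hξ T hT
    obtain ⟨⟨M₀, hM₀⟩, R, hR, hsub⟩ := hT
    set M : ℝ := max M₀ 0 with hMdef
    have hM : ∀ x y, ‖T x y‖ ≤ M := fun x y =>
      (hM₀ x y).trans (le_max_left _ _)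
    have hM0 : (0 : ℝ) ≤ M := le_max_right _ _
    obtain ⟨N, hN⟩ := hX.boundedGeometry R hR
    -- rows and columns are finite with bounded cardinality
    have hrowsub : ∀ x : X, {y | T x y ≠ 0} ⊆ {y | edist x y ≤ R} := by
      intro x y hy
      exact hsub (show (x, y) ∈ matSupport T from hy)
    have hrowfin : ∀ x : X, {y | T x y ≠ 0}.Finite := fun x =>
      (hN x).1.subset (hrowsub x)
    have hrowcard : ∀ x : X, {y | T x y ≠ 0}.ncard ≤ N := fun x =>
      le_trans (Set.ncard_le_ncard (hrowsub x) (hN x).1) (hN x).2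
    have hcolsub : ∀ y : X, {x | T x y ≠ 0} ⊆ {x | edist y x ≤ R} := by
      intro y x hx
      have : edist x y ≤ R := hsub (show (x, y) ∈ matSupport T from hx)
      simpa [edist_comm] using this
    have hcolfin : ∀ y : X, {x | T x y ≠ 0}.Finite := fun y =>
      (hN y).1.subset (hcolsub y)
    have hcolcard : ∀ y : X, {x | T x y ≠ 0}.ncard ≤ N := fun y =>
      le_trans (Set.ncard_le_ncard (hcolsub y) (hN y).1) (hN y).2
    -- choose injections into Fin (N+1)
    choose rI hrI using fun x => exists_injOn_fin' (hrowfin x) (hrowcard x)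
    choose cI hcI using fun y => exists_injOn_fin' (hcolfin y) (hcolcard y)
    -- the partial translations
    set V : Fin (N + 1) × Fin (N + 1) → X → X → ℂ :=
      fun p x y => if T x y ≠ 0 ∧ rI x y = p.1 ∧ cI y x = p.2 then 1 else 0 with hVdef
    have hV01 : ∀ p x y, V p x y = 0 ∨ V p x y = 1 := by
      intro p x y
      by_cases h : T x y ≠ 0 ∧ rI x y = p.1 ∧ cI y x = p.2
      · right; simp [hVdef, h]
      · left; simp [hVdef, h]
    have hVone : ∀ p x y, V p x y = 1 ↔ (T x y ≠ 0 ∧ rI x y = p.1 ∧ cI y x = p.2) := by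
      intro p x y
      constructor
      · intro h
        by_contra hc
        rw [hVdef] at h
        simp only [if_neg hc] at h
        exact zero_ne_one h
      · intro h; simp [hVdef, h]
    have hPT : ∀ p, IsPartialTranslation (V p) := by
      intro p
      refine ⟨hV01 p, ?_, ?_, ?_⟩
      · intro x y y' hy hy'
        obtain ⟨hTy, hry, -⟩ := (hVone p x y).1 hy
        obtain ⟨hTy', hry', -⟩ := (hVone p x y').1 hy'
        exact hrI x hTy hTy' (hry.trans hry'.symm)
      · intro x x' y hx hx'
        obtain ⟨hTx, -, hcx⟩ := (hVone p x y).1 hx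
        obtain ⟨hTx', -, hcx'⟩ := (hVone p x' y).1 hx'
        exact hcI y hTx hTx' (hcx.trans hcx'.symm)
      · refine ⟨R, hR, fun q hq => ?_⟩
        have : T q.1 q.2 ≠ 0 := by
          intro h0
          apply hq
          show V p q.1 q.2 = 0
          rw [hVdef]
          simp [h0]
        exact hsub this
    -- the pieces
    set Tij : Fin (N + 1) × Fin (N + 1) → X → X → ℂ :=
      fun p x y => T x y * V p x y with hTijdef
    set f : Fin (N + 1) × Fin (N + 1) → X → ℂ :=
      fun p x => ∑' y, Tij p x y with hfdef
    -- summability helpers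
    have hTijsummable : ∀ p x, Summable (fun y => Tij p x y) := by
      intro p x
      apply summable_of_ne_finset_zero (s := (hrowfin x).toFinset)
      intro y hy
      rw [Set.Finite.mem_toFinset] at hy
      have : T x y = 0 := by simpa using hy
      simp [hTijdef, this]
    -- T decomposes as the sum of the pieces
    have hTsum : T = ∑ p : Fin (N + 1) × Fin (N + 1), Tij p := by
      funext x y
      rw [Finset.sum_apply, Finset.sum_apply]
      simp only [hTijdef]
      rw [← Finset.mul_sum]
      by_cases h : T x y = 0
      · simp [h]
      · have : ∑ p : Fin (N + 1) × Fin (N + 1), V p x y = 1 := by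
          rw [Finset.sum_eq_single_of_mem (⟨rI x y, cI y x⟩ : Fin (N + 1) × Fin (N + 1))
            (Finset.mem_univ _)]
          · exact (hVone _ x y).2 ⟨h, rfl, rfl⟩
          · intro b _ hb
            rcases hV01 b x y with h0 | h1
            · exact h0
            · obtain ⟨-, hr, hc⟩ := (hVone b x y).1 h1
              exact absurd (Prod.ext hr.symm hc.symm) hb
        rw [this, mul_one]
    -- value of f where V has a 1
    have hfval : ∀ p x y, V p x y = 1 → f p x = T x y := by
      intro p x y h1
      have : f p x = Tij p x y := by
        apply tsum_eq_single
        intro y' hy'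
        rcases hV01 p x y' with h0 | h1'
        · simp [hTijdef, h0]
        · exact absurd ((hPT p).2.1 x y y' h1 h1') (Ne.symm hy')
      rw [this]
      simp [hTijdef, h1]
    have hf0 : ∀ p x, (∀ y, V p x y ≠ 1) → f p x = 0 := by
      intro p x h
      have : ∀ y, Tij p x y = 0 := by
        intro y
        rcases hV01 p x y with h0 | h1
        · simp [hTijdef, h0]
        · exact absurd h1 (h y)
      have h2 : f p x = ∑' _ : X, (0 : ℂ) := tsum_congr this
      simpa using h2
    have hfbd : ∀ p x, ‖f p x‖ ≤ M := by
      intro p x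
      by_cases h : ∃ y, V p x y = 1
      · obtain ⟨y, hy⟩ := h
        rw [hfval p x y hy]; exact hM x y
      · push_neg at h
        rw [hf0 p x h]; simpa using hM0
    have hcuV : ∀ p, CuElem (V p) := fun p =>
      ⟨⟨1, fun x y => by rcases hV01 p x y with h0 | h0 <;> simp [h0]⟩, (hPT p).2.2.2⟩
    have hTijsupp : ∀ p, matSupport (Tij p) ⊆ matSupport T := by
      intro p q hq h0
      exact hq (by simp [hTijdef, h0])
    have hcuTij : ∀ p, CuElem (Tij p) := by
      intro p
      refine ⟨⟨M, fun x y => ?_⟩, controlled_mono' (hTijsupp p) ⟨R, hR, hsub⟩⟩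
      rcases hV01 p x y with h0 | h1
      · simp [hTijdef, h0, hM0]
      · simp only [hTijdef, h1, mul_one]
        exact hM x y
    have hcuf : ∀ p, CuElem (diag (f p)) := fun p =>
      cuElem_diag' ⟨M, fun x => ⟨hfbd p x, hM0⟩⟩
    have hkey2 : ∀ p, Tij p = matMul (diag (f p)) (V p) := by
      intro p
      rw [matMul_diag_left']
      funext x y
      rcases hV01 p x y with h0 | h1
      · simp [hTijdef, h0]
      · simp only [hTijdef, h1, mul_one]
        rw [hfval p x y h1]
    set g : Fin (N + 1) × Fin (N + 1) → X → ℂ := fun p x => ∑' y, V p x y with hgdef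
    have hgval : ∀ p x, (∃ y, V p x y = 1) → g p x = 1 := by
      rintro p x ⟨y, hy⟩
      have : g p x = V p x y := by
        apply tsum_eq_single
        intro y' hy'
        rcases hV01 p x y' with h0 | h1
        · exact h0
        · exact absurd ((hPT p).2.1 x y y' hy h1) (Ne.symm hy')
      rw [this, hy]
    have hg01 : ∀ p x, ‖g p x‖ ≤ 1 := by
      intro p x
      by_cases h : ∃ y, V p x y = 1
      · rw [hgval p x h]; simp
      · push_neg at h
        have hz : ∀ y, V p x y = 0 := fun y => (hV01 p x y).resolve_right (h y)
        have hg0 : g p x = 0 := by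
          have h2 : g p x = ∑' _ : X, (0 : ℂ) := tsum_congr hz
          simpa using h2
        simp [hg0]
    have hfg : ∀ p x, f p x * g p x = f p x := by
      intro p x
      by_cases h : ∃ y, V p x y = 1
      · rw [hgval p x h, mul_one]
      · push_neg at h
        rw [hf0 p x h, zero_mul]
    have hpiece : ∀ p, π (diag (f p)) ξ = π (Tij p) ξ := by
      intro p
      have hgdiag : matMul (V p) (matStar (V p)) = diag (g p) := pt_mul_star' (hPT p)
      have hcug : CuElem (diag (g p)) := cuElem_diag' ⟨1, fun x => ⟨hg01 p x, zero_le_one⟩⟩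
      have hdd : matMul (diag (f p)) (diag (g p)) = diag (f p) := by
        rw [matMul_diag_left']
        funext x y
        by_cases hxy : x = y
        · subst hxy
          simp only [diag, if_pos rfl]
          exact hfg p x
        · simp [diag, hxy]
      calc π (diag (f p)) ξ
          = π (matMul (diag (f p)) (diag (g p))) ξ := by rw [hdd]
        _ = π (diag (f p)) (π (diag (g p)) ξ) := by
            rw [hπ.map_mul _ _ (hcuf p) hcug]; rfl
        _ = π (diag (f p)) (π (matMul (V p) (matStar (V p))) ξ) := by rw [hgdiag]
        _ = π (diag (f p)) (π (V p) ξ) := by rw [hξ (V p) (hPT p)]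
        _ = π (matMul (diag (f p)) (V p)) ξ := by
            rw [hπ.map_mul _ _ (hcuf p) (hcuV p)]; rfl
        _ = π (Tij p) ξ := by rw [← hkey2 p]
    have hPhi : (fun x => ∑' y : X, T x y) = ∑ p : Fin (N + 1) × Fin (N + 1), f p := by
      funext x
      rw [Finset.sum_apply]
      have hc : ∀ y : X, T x y = ∑ p : Fin (N + 1) × Fin (N + 1), Tij p x y := by
        intro y
        conv_lhs => rw [hTsum]
        rw [Finset.sum_apply, Finset.sum_apply]
      calc ∑' y, T x y = ∑' y, ∑ p : Fin (N + 1) × Fin (N + 1), Tij p x y := tsum_congr hc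
        _ = ∑ p : Fin (N + 1) × Fin (N + 1), ∑' y, Tij p x y :=
            Summable.tsum_finsetSum fun p _ => hTijsummable p x
    have hdiagsum : diag (fun x => ∑' y : X, T x y) =
        ∑ p : Fin (N + 1) × Fin (N + 1), diag (f p) := by
      rw [hPhi]
      funext x y
      by_cases h : x = y
      · simp [diag, h, Finset.sum_apply]
      · simp [diag, h, Finset.sum_apply]
    rw [hdiagsum, pi_sum' hπ _ _ fun p _ => hcuf p]
    conv_rhs => rw [hTsum]
    rw [pi_sum' hπ _ _ fun p _ => hcuTij p]
    rw [ContinuousLinearMap.sum_apply, ContinuousLinearMap.sum_apply]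
    exact Finset.sum_congr rfl fun p _ => hpiece p
  · -- backward direction
    intro h v hv
    have hcu : CuElem v := by
      refine ⟨⟨1, fun x y => ?_⟩, hv.2.2.2⟩
      rcases hv.1 x y with h0 | h1
      · simp [h0]
      · simp [h1]
    rw [pt_mul_star' hv]
    exact (h v hcu).symm

end GeomPropT
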